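/- Define W : ℂ⁶ × ℂ⁶ → (exterior algebra of ℂ⁶) by W(t,u) := (α + t₁₁ᾱ + t₁₂β̄)∧(γ + t₃₁ᾱ + t₃₂β̄ − D(t)γ̄)∧(ᾱ + u₁₁α + u₁₂β)∧(γ̄ + u₃₁α + u₃₂β − D(u)γ), where D(t) := t₁₁t₂₂ − t₁₂t₂₁ and u plays the role of the conjugate parameter t̄. Then for each fixed t, the map u ↦ W(t,u) is ℂ-differentiable, and its derivative at (t,u) = (0,0) in the direction w ∈ ℂ⁶ equals −w₁₂·(α∧β∧γ∧γ̄) + w₃₂·(α∧β∧γ∧ᾱ). (This is the computation (6.1st_deriv_G) of the paper: the only nonvanishing anti-holomorphic first-order derivatives at t = 0 of α_t∧γ_t∧ᾱ_t∧γ̄_t are ∂/∂t̄₁₂ = −α∧β∧γ∧γ̄ and ∂/∂t̄₃₂ = α∧β∧γ∧ᾱ; it is the key step in proving that F_𝒢ℋ⁴ is a holomorphic subbundle, Lemma 6.6.) -/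

import Mathlib

noncomputable section

/-- The exterior algebra of `ℂ⁶` in which all cohomology computations on the Iwasawa
manifold are carried out. -/
abbrev Λ6 : Type := ExteriorAlgebra ℂ (Fin 6 → ℂ)

/-- The degree-one generator corresponding to the `i`-th basis vector of `ℂ⁶`. -/
def gen (i : Fin 6) : Λ6 := ExteriorAlgebra.ι ℂ (Pi.single i (1 : ℂ))

/-- `α` -/ def α : Λ6 := gen 0
/-- `β` -/ def β : Λ6 := gen 1
/-- `γ` -/ def γ : Λ6 := gen 2
/-- `ᾱ` -/ def α' : Λ6 := gen 3
/-- `β̄` -/ def β' : Λ6 := gen 4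
/-- `γ̄` -/ def γ' : Λ6 := gen 5

-- indexing convention for parameters: t 0 = t₁₁, t 1 = t₁₂, t 2 = t₂₁, t 3 = t₂₂,
-- t 4 = t₃₁, t 5 = t₃₂ (and the same for u, which plays the role of t̄).

/-- `D(t) = t₁₁t₂₂ − t₁₂t₂₁` -/
def Dd (t : Fin 6 → ℂ) : ℂ := t 0 * t 3 - t 1 * t 2

/-- The Aeppli representative `α_t∧γ_t∧ᾱ_t∧γ̄_t` with the conjugated parameters treated
as the independent variables `u`. -/
def W (t u : Fin 6 → ℂ) : Λ6 :=
  (α + t 0 • α' + t 1 • β') * (γ + t 4 • α' + t 5 • β' - Dd t • γ') *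
    (α' + u 0 • α + u 1 • β) * (γ' + u 4 • α + u 5 • β - Dd u • γ)


/-! `W t u = holPart t ∧ ι (alphaBarVec u) ∧ ι (gammaBarVec u)`, where `alphaBarVec u` and
`gammaBarVec u ∈ ℂ⁶` are the coefficient vectors of `ᾱ_t` and `γ̄_t`. After applying a linear
functional, `u ↦ W t u` is a fixed bilinear form on the finite-dimensional space `ℂ⁶` evaluated at
these two vectors, so it is differentiable and obeys the Leibniz rule. At `u = 0` the quadratic
term `D(u)` has zero derivative, and `holPart 0 = α ∧ γ` kills the `α`-components of both
variations, leaving only their `β`-components `w₁₂` and `w₃₂`.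
-/
open ExteriorAlgebra ContinuousLinearMap

section BilinearCalculus

variable {𝕜 E F G H : Type*} [NontriviallyNormedField 𝕜] [CompleteSpace 𝕜]
  [NormedAddCommGroup E] [NormedSpace 𝕜 E] [FiniteDimensional 𝕜 E]
  [NormedAddCommGroup F] [NormedSpace 𝕜 F] [FiniteDimensional 𝕜 F]
  [NormedAddCommGroup G] [NormedSpace 𝕜 G] [NormedAddCommGroup H] [NormedSpace 𝕜 H]

theorem LinearMap.differentiable_of_bilinear (Φ : E →ₗ[𝕜] F →ₗ[𝕜] G) {a : H → E} {b : H → F}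
    (ha : Differentiable 𝕜 a) (hb : Differentiable 𝕜 b) :
    Differentiable 𝕜 fun y => Φ (a y) (b y) := fun x =>
  (Φ.toContinuousBilinearMap.hasFDerivAt_of_bilinear (ha x).hasFDerivAt
    (hb x).hasFDerivAt).differentiableAt

theorem LinearMap.fderiv_of_bilinear_apply (Φ : E →ₗ[𝕜] F →ₗ[𝕜] G) {a : H → E} {b : H → F}
    {a' : H →L[𝕜] E} {b' : H →L[𝕜] F} {x : H} (ha : HasFDerivAt a a' x)
    (hb : HasFDerivAt b b' x) (w : H) :
    fderiv 𝕜 (fun y => Φ (a y) (b y)) x w = Φ (a x) (b' w) + Φ (a' w) (b x) := by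
  rw [show (fun y => Φ (a y) (b y)) = fun y => Φ.toContinuousBilinearMap (a y) (b y) from rfl,
    (Φ.toContinuousBilinearMap.hasFDerivAt_of_bilinear ha hb).fderiv]
  rfl

end BilinearCalculus

lemma gen_mul_self (i : Fin 6) : gen i * gen i = 0 := ι_sq_zero _

lemma gen_mul_comm (i j : Fin 6) : gen i * gen j = -(gen j * gen i) :=
  eq_neg_of_add_eq_zero_left (ι_add_mul_swap _ _)

lemma gen_mul_gen_mul_self (i : Fin 6) (x : Λ6) : gen i * (gen i * x) = 0 := by
  rw [← mul_assoc, gen_mul_self, zero_mul]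

lemma gen_mul_gen_mul_comm (i j : Fin 6) (x : Λ6) :
    gen i * (gen j * x) = -(gen j * (gen i * x)) := by
  rw [← mul_assoc, gen_mul_comm, neg_mul, mul_assoc]

def alphaBarVec (u : Fin 6 → ℂ) : Fin 6 → ℂ :=
  Pi.single 3 1 + u 0 • Pi.single 0 1 + u 1 • Pi.single 1 1

def gammaBarVec (u : Fin 6 → ℂ) : Fin 6 → ℂ :=
  Pi.single 5 1 + u 4 • Pi.single 0 1 + u 5 • Pi.single 1 1 - Dd u • Pi.single 2 1

def holPart (t : Fin 6 → ℂ) : Λ6 :=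
  (α + t 0 • α' + t 1 • β') * (γ + t 4 • α' + t 5 • β' - Dd t • γ')

def wedgePairing (p : Λ6) (f : Λ6 →ₗ[ℂ] ℂ) : (Fin 6 → ℂ) →ₗ[ℂ] (Fin 6 → ℂ) →ₗ[ℂ] ℂ :=
  ((LinearMap.mul ℂ Λ6).compl₁₂ (LinearMap.mulLeft ℂ p ∘ₗ ι ℂ) (ι ℂ)).compr₂ f

lemma wedgePairing_apply (p : Λ6) (f : Λ6 →ₗ[ℂ] ℂ) (x y : Fin 6 → ℂ) :
    wedgePairing p f x y = f (p * ι ℂ x * ι ℂ y) := rfl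

lemma W_eq_holPart_mul (t u : Fin 6 → ℂ) :
    W t u = holPart t * ι ℂ (alphaBarVec u) * ι ℂ (gammaBarVec u) := by
  simp [W, holPart, alphaBarVec, gammaBarVec, α, β, γ, α', β', γ', gen]

lemma differentiable_alphaBarVec : Differentiable ℂ alphaBarVec := by
  unfold alphaBarVec; fun_prop

lemma differentiable_gammaBarVec : Differentiable ℂ gammaBarVec := by
  unfold gammaBarVec Dd; fun_prop

lemma hasFDerivAt_Dd_zero : HasFDerivAt Dd (0 : (Fin 6 → ℂ) →L[ℂ] ℂ) 0 := by
  have hproj (i : Fin 6) : HasFDerivAt (fun v : Fin 6 → ℂ => v i) (proj (R := ℂ) i) 0 :=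
    hasFDerivAt_apply i 0
  exact (((hproj 0).mul (hproj 3)).sub ((hproj 1).mul (hproj 2))).congr_fderiv (by ext; simp)

lemma hasFDerivAt_alphaBarVec (u : Fin 6 → ℂ) :
    HasFDerivAt alphaBarVec
      ((proj (R := ℂ) 0).smulRight (Pi.single 0 1) + (proj 1).smulRight (Pi.single 1 1)) u := by
  have hproj (i : Fin 6) : HasFDerivAt (fun v : Fin 6 → ℂ => v i) (proj (R := ℂ) i) u :=
    hasFDerivAt_apply i u
  have h := ((hasFDerivAt_const (Pi.single 3 1 : Fin 6 → ℂ) u).add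
    ((hproj 0).smul_const (Pi.single 0 1 : Fin 6 → ℂ))).add
    ((hproj 1).smul_const (Pi.single 1 1 : Fin 6 → ℂ))
  exact h.congr_fderiv (by rw [zero_add])

lemma hasFDerivAt_gammaBarVec_zero :
    HasFDerivAt gammaBarVec
      ((proj (R := ℂ) 4).smulRight (Pi.single 0 1) + (proj 5).smulRight (Pi.single 1 1)) 0 := by
  have hproj (i : Fin 6) : HasFDerivAt (fun v : Fin 6 → ℂ => v i) (proj (R := ℂ) i) 0 :=
    hasFDerivAt_apply i 0
  have h := (((hasFDerivAt_const (Pi.single 5 1 : Fin 6 → ℂ) 0).add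
    ((hproj 4).smul_const (Pi.single 0 1 : Fin 6 → ℂ))).add
    ((hproj 5).smul_const (Pi.single 1 1 : Fin 6 → ℂ))).sub
    (hasFDerivAt_Dd_zero.smul_const (Pi.single 2 1 : Fin 6 → ℂ))
  exact h.congr_fderiv (by simp)

lemma holPart_zero : holPart 0 = α * γ := by simp [holPart, Dd]

lemma alpha_gamma_wedge_variation (a b c d : ℂ) :
    α * γ * α' * (a • α + b • β) + α * γ * (c • α + d • β) * γ' =
      -d • (α * β * γ * γ') + b • (α * β * γ * α') := by
  simp only [α, β, γ, α', γ', mul_add, add_mul, mul_assoc, mul_smul_comm, smul_mul_assoc,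
    mul_neg, neg_neg, neg_zero, smul_zero, smul_neg, gen_mul_gen_mul_self,
    gen_mul_gen_mul_comm 2 0, gen_mul_gen_mul_comm 2 1, gen_mul_comm 3 0, gen_mul_comm 3 1]
  module

/-- For each fixed `t`, the map `u ↦ W(t,u)` is ℂ-differentiable, and its derivative at
`(t,u) = (0,0)` in the direction `w` equals `−w₁₂·(α∧β∧γ∧γ̄) + w₃₂·(α∧β∧γ∧ᾱ)`. Since the
exterior algebra `Λ6` is a finite-dimensional complex vector space (which carries no
distinguished norm in Mathlib), differentiability and the value of the derivative are
expressed, equivalently, after composing with an arbitrary ℂ-linear functional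
`f : Λ6 →ₗ[ℂ] ℂ`. -/
theorem antiholomorphic_derivative_of_Aeppli_generator :
    (∀ (t : Fin 6 → ℂ) (f : Λ6 →ₗ[ℂ] ℂ), Differentiable ℂ (fun u => f (W t u))) ∧
    (∀ (w : Fin 6 → ℂ) (f : Λ6 →ₗ[ℂ] ℂ),
      fderiv ℂ (fun u => f (W 0 u)) 0 w
        = f ((-(w 1)) • (α * β * γ * γ') + w 5 • (α * β * γ * α'))) := by
  have hW (t : Fin 6 → ℂ) (f : Λ6 →ₗ[ℂ] ℂ) : (fun u => f (W t u)) =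
      fun u => wedgePairing (holPart t) f (alphaBarVec u) (gammaBarVec u) := by
    funext u
    rw [W_eq_holPart_mul]
    rfl
  refine ⟨fun t f => ?_, fun w f => ?_⟩
  · rw [hW]
    exact (wedgePairing _ f).differentiable_of_bilinear differentiable_alphaBarVec
      differentiable_gammaBarVec
  · rw [hW, (wedgePairing _ f).fderiv_of_bilinear_apply (hasFDerivAt_alphaBarVec 0)
      hasFDerivAt_gammaBarVec_zero, wedgePairing_apply, wedgePairing_apply, ← map_add,
      ← alpha_gamma_wedge_variation (w 4) _ (w 0)]
    simp [holPart_zero, alphaBarVec, gammaBarVec, Dd, α, β, α', γ', gen]
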